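/- arXiv:1706.03306 — 2 statements merged into one kernel-verified Lean document; each statement's English description precedes it below -/
import Mathlib

section
/- (Additive law) Let r ≥ 2, e ≥ 2, n ≥ 1 and v be integers and let l be an integer with 1 ≤ l ≤ r. Then f_r(n, v, e) ≤ f_r(n, v − r + l, e − 1) + binom(n, l)/binom(r, l), where the inequality is between real numbers. -/
/-!
Take an extremal `G_r(v,e)`-free hypergraph `H` and a maximal subfamily `H₁` whose edges pairwise
share fewer than `l` vertices. The `l`-subsets of the edges of `H₁` are distinct, so
`|H₁| · C(r,l) ≤ C(n,l)`. By maximality every other edge `B` shares at least `l` vertices with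
some `A ∈ H₁`; adding `A` to any `e - 1` edges of `H \ H₁` containing `B` costs at most
`r - l` new vertices, so `H \ H₁` is `G_r(v - r + l, e - 1)`-free.
-/

open Finset

/-- A hypergraph `H` is `G_r(v,e)`-free if any `e` distinct edges span at least `v+1` vertices. -/
def GFree {V : Type*} [DecidableEq V] (H : Finset (Finset V)) (v e : ℕ) : Prop :=
  ∀ S ⊆ H, S.card = e → v + 1 ≤ (S.biUnion id).card

/-- `extremalF r n v e` is the maximum number of edges of a `G_r(v,e)`-free `r`-uniform
hypergraph on `n` vertices. -/
noncomputable def extremalF (r n v e : ℕ) : ℕ :=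
  sSup {m : ℕ | ∃ H : Finset (Finset (Fin n)),
    (∀ A ∈ H, A.card = r) ∧ GFree H v e ∧ H.card = m}

lemma bddAbove_extremalF_set (r n v e : ℕ) : BddAbove {m : ℕ | ∃ H : Finset (Finset (Fin n)),
    (∀ A ∈ H, A.card = r) ∧ GFree H v e ∧ H.card = m} := by
  refine ⟨Fintype.card (Finset (Fin n)), ?_⟩
  rintro m ⟨H, -, -, rfl⟩
  exact card_le_univ H

lemma card_le_extremalF {r n v e : ℕ} {H : Finset (Finset (Fin n))}
    (hunif : ∀ A ∈ H, #A = r) (hfree : GFree H v e) : #H ≤ extremalF r n v e :=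
  le_csSup (bddAbove_extremalF_set r n v e) ⟨H, hunif, hfree, rfl⟩

lemma exists_card_eq_extremalF (r n v : ℕ) {e : ℕ} (he : e ≠ 0) :
    ∃ H : Finset (Finset (Fin n)),
      (∀ A ∈ H, #A = r) ∧ GFree H v e ∧ #H = extremalF r n v e := by
  have hempty : GFree (∅ : Finset (Finset (Fin n))) v e := by
    intro S hS hcard
    rw [subset_empty.mp hS, card_empty] at hcard
    exact absurd hcard.symm he
  refine Nat.sSup_mem ?_ (bddAbove_extremalF_set r n v e)
  exact ⟨0, ∅, by simp, hempty, rfl⟩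

lemma exists_maximal_pairwise_subset {α : Type*} [DecidableEq α] (R : α → α → Prop)
    (H : Finset α) : ∃ H₁ ⊆ H, (H₁ : Set α).Pairwise R ∧
      ∀ B ∈ H \ H₁, ∃ A ∈ H₁, ¬ (R B A ∧ R A B) := by
  classical
  set packings := H.powerset.filter fun S : Finset α => (S : Set α).Pairwise R
  obtain ⟨H₁, hH₁, hmax⟩ := packings.exists_max_image card ⟨∅, by simp [packings]⟩
  rw [mem_filter, mem_powerset] at hH₁
  refine ⟨H₁, hH₁.1, hH₁.2, fun B hB => ?_⟩
  rw [mem_sdiff] at hB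
  by_contra! hfar
  have hins : insert B H₁ ∈ packings := by
    rw [mem_filter, mem_powerset, coe_insert, Set.pairwise_insert_of_notMem (by simpa using hB.2)]
    exact ⟨insert_subset hB.1 hH₁.1, hH₁.2, hfar⟩
  have := hmax _ hins
  rw [card_insert_of_notMem hB.2] at this
  omega

lemma card_mul_choose_le_of_pairwise_card_inter_lt {V : Type*} [Fintype V] [DecidableEq V]
    {H : Finset (Finset V)} {r l : ℕ} (hunif : ∀ A ∈ H, #A = r)
    (hpack : (H : Set (Finset V)).Pairwise fun A B => #(A ∩ B) < l) :
    #H * r.choose l ≤ (Fintype.card V).choose l := by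
  have hdisj : (H : Set (Finset V)).PairwiseDisjoint (powersetCard l) := by
    intro A hA B hB hAB
    refine disjoint_left.mpr fun s hsA hsB => ?_
    rw [mem_powersetCard] at hsA hsB
    have := card_le_card (subset_inter hsA.1 hsB.1)
    have := hpack hA hB hAB
    omega
  calc #H * r.choose l = #(H.biUnion (powersetCard l)) := by
        rw [card_biUnion hdisj, sum_congr rfl fun A hA => by rw [card_powersetCard, hunif A hA],
          sum_const, smul_eq_mul]
    _ ≤ #(powersetCard l (univ : Finset V)) :=
        card_le_card fun s hs => by
          obtain ⟨A, -, hs⟩ := mem_biUnion.mp hs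
          exact mem_powersetCard.mpr ⟨subset_univ s, (mem_powersetCard.mp hs).2⟩
    _ = (Fintype.card V).choose l := by rw [card_powersetCard, card_univ]

lemma gFree_sdiff_of_forall_exists_le_card_inter {V : Type*} [DecidableEq V]
    {H H₁ : Finset (Finset V)} {r v e l : ℕ}
    (he : 2 ≤ e) (hunif : ∀ A ∈ H, #A = r) (hfree : GFree H v e) (hH₁ : H₁ ⊆ H)
    (hcover : ∀ B ∈ H \ H₁, ∃ A ∈ H₁, l ≤ #(A ∩ B)) :
    GFree (H \ H₁) (v + l - r) (e - 1) := by
  intro S hS hcard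
  by_contra! hsmall
  obtain ⟨B, hBS⟩ := card_pos.mp (by omega : 0 < #S)
  obtain ⟨A, hAH₁, hAB⟩ := hcover B (hS hBS)
  have hAS : A ∉ S := fun hAS => (mem_sdiff.mp (hS hAS)).2 hAH₁
  have hspan := hfree (insert A S) (insert_subset (hH₁ hAH₁) (hS.trans sdiff_subset))
    (by rw [card_insert_of_notMem hAS]; omega)
  have hBspan : B ⊆ S.biUnion id := subset_biUnion_of_mem id hBS
  have hnew : (insert A S).biUnion id ⊆ (A \ B) ∪ S.biUnion id := by
    intro x hx
    rw [biUnion_insert, id, mem_union] at hx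
    rw [mem_union, mem_sdiff]
    by_cases hxB : x ∈ B
    · exact Or.inr (hBspan hxB)
    · exact hx.imp (fun hxA => ⟨hxA, hxB⟩) id
  have hA := hunif A (hH₁ hAH₁)
  have hB := hunif B (sdiff_subset (hS hBS))
  have := card_inter_add_card_sdiff A B
  have := card_le_card (inter_subset_right : A ∩ B ⊆ B)
  -- `S` spans at least `#B = r` vertices, so the subtraction in `v + l - r` does not truncate.
  have := card_le_card hBspan
  have := (card_le_card hnew).trans (card_union_le _ _)
  omega

theorem additive_law_general (r e n v l : ℕ) (he : 2 ≤ e) (hl2 : l ≤ r) :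
    (extremalF r n v e : ℝ) ≤ (extremalF r n (v + l - r) (e - 1) : ℝ) +
      (n.choose l : ℝ) / (r.choose l : ℝ) := by
  obtain ⟨H, hunif, hfree, hH⟩ := exists_card_eq_extremalF r n v (by omega : e ≠ 0)
  obtain ⟨H₁, hH₁, hpack, hmax⟩ :=
    exists_maximal_pairwise_subset (fun A B : Finset (Fin n) => #(A ∩ B) < l) H
  have hcover : ∀ B ∈ H \ H₁, ∃ A ∈ H₁, l ≤ #(A ∩ B) := fun B hB => by
    obtain ⟨A, hA, hnear⟩ := hmax B hB
    exact ⟨A, hA, not_lt.mp fun h => hnear ⟨inter_comm A B ▸ h, h⟩⟩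
  have hrest : #(H \ H₁) ≤ extremalF r n (v + l - r) (e - 1) :=
    card_le_extremalF (fun A hA => hunif A (sdiff_subset hA))
      (gFree_sdiff_of_forall_exists_le_card_inter he hunif hfree hH₁ hcover)
  have hpacking : (#H₁ : ℝ) ≤ n.choose l / r.choose l := by
    rw [le_div_iff₀ (by exact_mod_cast Nat.choose_pos hl2)]
    exact_mod_cast Fintype.card_fin n ▸
      card_mul_choose_le_of_pairwise_card_inter_lt (fun A hA => hunif A (hH₁ hA)) hpack
  rw [← hH, ← card_sdiff_add_card_eq_card hH₁, Nat.cast_add]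
  exact add_le_add (by exact_mod_cast hrest) hpacking

theorem additive_law (r e n v l : ℕ) (hr : 2 ≤ r) (he : 2 ≤ e) (hn : 1 ≤ n)
    (hl1 : 1 ≤ l) (hl2 : l ≤ r) :
    (extremalF r n v e : ℝ) ≤ (extremalF r n (v + l - r) (e - 1) : ℝ) +
      (n.choose l : ℝ) / (r.choose l : ℝ) :=
  additive_law_general r e n v l he hl2
end

section
/- Let e ≥ 4 and r ≥ 3 be integers and let H be an r-uniform r-partite linear hypergraph consisting of exactly e edges whose vertex set is the union of its edges. Assume that H is G_r(3r−3, 3)-free and G_r((e−1)(r−2)+3, e−1)-free, and that |V(H)| ≤ e(r−2)+3. Then every vertex of H has degree at most ⌊e/3⌋, where the degree of a vertex is the number of edges containing it. -/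
open Finset

/-!
Fix a vertex `x`. Each edge `A ∋ x` shares at least three vertices with the other edges: otherwise
removing `A` leaves `e - 1` edges on too few vertices. By linearity, two of these vertices lie on
two distinct edges avoiding `x`. No edge avoiding `x` meets two edges through `x`, since such a
triple would span at most `3r - 3` vertices. Hence the edges avoiding `x` are at least twice as many
as those through `x`, so `3 deg x ≤ e`.
-/

lemma card_eq_of_card_fiber_eq_one {V ι : Type*} [Fintype ι] [DecidableEq ι] {A : Finset V}
    (f : V → ι) (hA : ∀ i, #(A.filter fun y => f y = i) = 1) : #A = Fintype.card ι := by
  rw [card_eq_sum_card_fiberwise (t := univ) fun y _ => mem_univ (f y),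
    sum_congr rfl fun i _ => hA i, sum_const, smul_eq_mul, mul_one, card_univ]

namespace Hypergraph

variable {V : Type*} [DecidableEq V] {H : Finset (Finset V)}

def IsUniform (r : ℕ) (H : Finset (Finset V)) : Prop :=
  ∀ A ∈ H, #A = r

def IsLinear (H : Finset (Finset V)) : Prop :=
  ∀ A ∈ H, ∀ B ∈ H, A ≠ B → #(A ∩ B) ≤ 1

def neighborsAvoiding (H : Finset (Finset V)) (x : V) (A : Finset V) : Finset (Finset V) :=
  H.filter fun B => x ∉ B ∧ (A ∩ B).Nonempty

lemma IsLinear.eq_of_mem_inter (hH : IsLinear H) {A B : Finset V} (hA : A ∈ H) (hB : B ∈ H)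
    (hAB : A ≠ B) {y z : V} (hy : y ∈ A ∩ B) (hz : z ∈ A ∩ B) : y = z :=
  card_le_one.mp (hH A hA B hB hAB) y hy z hz

lemma _root_.GFree.lt_card_biUnion_erase {v : ℕ} (hH : GFree H v (#H - 1)) {A : Finset V}
    (hA : A ∈ H) : v < #((H.erase A).biUnion id) :=
  hH _ (erase_subset A H) (card_erase_of_mem hA)

lemma _root_.GFree.lt_card_union_union {v : ℕ} (hH : GFree H v 3) {A B C : Finset V}
    (hA : A ∈ H) (hB : B ∈ H) (hC : C ∈ H) (hAB : A ≠ B) (hAC : A ≠ C) (hBC : B ≠ C) :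
    v < #(A ∪ B ∪ C) := by
  have hsub : {A, B, C} ⊆ H := by
    simp only [insert_subset_iff, singleton_subset_iff]
    exact ⟨hA, hB, hC⟩
  have := hH _ hsub (card_eq_three.mpr ⟨A, B, C, hAB, hAC, hBC, rfl⟩)
  simpa [biUnion_insert, union_assoc] using this

lemma card_inter_biUnion_erase_add {A : Finset V} (hA : A ∈ H) :
    #(A ∩ (H.erase A).biUnion id) + #(H.biUnion id) = #A + #((H.erase A).biUnion id) := by
  have hunion : H.biUnion id = A ∪ (H.erase A).biUnion id := by
    conv_lhs => rw [← insert_erase hA]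
    rw [biUnion_insert, id]
  rw [hunion, add_comm, card_union_add_card_inter]

lemma three_le_card_inter_biUnion_erase {r : ℕ} (hunif : IsUniform r H)
    (hfree : GFree H ((#H - 1) * (r - 2) + 3) (#H - 1))
    (hV : #(H.biUnion id) ≤ #H * (r - 2) + 3) {A : Finset V} (hA : A ∈ H) :
    3 ≤ #(A ∩ (H.erase A).biUnion id) := by
  have hrest := hfree.lt_card_biUnion_erase hA
  have hsplit := card_inter_biUnion_erase_add hA
  have hinter := card_le_card (inter_subset_left (s₁ := A) (s₂ := (H.erase A).biUnion id))
  obtain ⟨n, hn⟩ := Nat.exists_eq_add_one_of_ne_zero (card_ne_zero_of_mem hA)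
  rw [hn, Nat.add_sub_cancel] at hrest
  rw [hn, add_one_mul] at hV
  rw [hunif A hA] at hsplit hinter
  omega

lemma card_union_union_add_three_le {A₁ A₂ B : Finset V} {x y₁ y₂ : V} (hx : x ∈ A₁ ∩ A₂)
    (hy₁ : y₁ ∈ A₁ ∩ B) (hy₂ : y₂ ∈ A₂ ∩ B) (hy : y₁ ≠ y₂) :
    #(A₁ ∪ A₂ ∪ B) + 3 ≤ #A₁ + #A₂ + #B := by
  have h₁₂ : 1 ≤ #(A₁ ∩ A₂) := card_pos.mpr ⟨x, hx⟩
  have hB : 2 ≤ #((A₁ ∪ A₂) ∩ B) := one_lt_card.mpr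
    ⟨y₁, inter_subset_inter_right subset_union_left hy₁,
     y₂, inter_subset_inter_right subset_union_right hy₂, hy⟩
  have := card_union_add_card_inter A₁ A₂
  have := card_union_add_card_inter (A₁ ∪ A₂) B
  omega

section Star

variable {r : ℕ} (hlin : IsLinear H) (x : V)
include hlin

/-- By linearity, distinct vertices of `A ∋ x` other than `x` lie on distinct edges avoiding `x`. -/
lemma two_le_card_neighborsAvoiding {A : Finset V} (hA : A ∈ H) (hxA : x ∈ A)
    (hrich : 3 ≤ #(A ∩ (H.erase A).biUnion id)) : 2 ≤ #(neighborsAvoiding H x A) := by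
  have hcover : ∀ y ∈ (A ∩ (H.erase A).biUnion id).erase x,
      ∃ C ∈ neighborsAvoiding H x A, y ∈ A ∩ C := by
    intro y hy
    obtain ⟨hyx, hyA, hyW⟩ : y ≠ x ∧ y ∈ A ∧ y ∈ (H.erase A).biUnion id := by
      simpa only [mem_erase, mem_inter] using hy
    obtain ⟨C, hC, hyC⟩ := mem_biUnion.mp hyW
    have hCH := mem_of_mem_erase hC
    have hxC : x ∉ C := fun hxC => hyx <|
      hlin.eq_of_mem_inter hA hCH (ne_of_mem_erase hC).symm (mem_inter.mpr ⟨hyA, hyC⟩)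
        (mem_inter.mpr ⟨hxA, hxC⟩)
    exact ⟨C, mem_filter.mpr ⟨hCH, hxC, y, mem_inter.mpr ⟨hyA, hyC⟩⟩, mem_inter.mpr ⟨hyA, hyC⟩⟩
  have herase := pred_card_le_card_erase (s := A ∩ (H.erase A).biUnion id) (a := x)
  obtain ⟨y₁, hy₁, y₂, hy₂, hy⟩ :=
    one_lt_card.mp (by omega : 1 < #((A ∩ (H.erase A).biUnion id).erase x))
  obtain ⟨C₁, hC₁, hyC₁⟩ := hcover y₁ hy₁
  obtain ⟨C₂, hC₂, hyC₂⟩ := hcover y₂ hy₂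
  refine one_lt_card.mpr ⟨C₁, hC₁, C₂, hC₂, fun hC => hy ?_⟩
  subst hC
  obtain ⟨hC₁H, hxC₁, -⟩ := mem_filter.mp hC₁
  exact hlin.eq_of_mem_inter hA hC₁H (fun h => hxC₁ (h ▸ hxA)) hyC₁ hyC₂

/-- An edge avoiding `x` and meeting two edges through `x` would form a triple on at most
`3r - 3` vertices. -/
lemma disjoint_neighborsAvoiding (hunif : IsUniform r H) (hfree3 : GFree H (3 * r - 3) 3)
    {A₁ A₂ : Finset V} (hA₁ : A₁ ∈ H) (hA₂ : A₂ ∈ H) (hA : A₁ ≠ A₂) (hxA₁ : x ∈ A₁)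
    (hxA₂ : x ∈ A₂) : Disjoint (neighborsAvoiding H x A₁) (neighborsAvoiding H x A₂) := by
  refine disjoint_left.mpr fun B hB₁ hB₂ => ?_
  obtain ⟨hB, hxB, y₁, hy₁⟩ := mem_filter.mp hB₁
  obtain ⟨-, -, y₂, hy₂⟩ := mem_filter.mp hB₂
  have hx : x ∈ A₁ ∩ A₂ := mem_inter.mpr ⟨hxA₁, hxA₂⟩
  have hy : y₁ ≠ y₂ := by
    rintro rfl
    have hxy := hlin.eq_of_mem_inter hA₁ hA₂ hA hx
      (mem_inter.mpr ⟨(mem_inter.mp hy₁).1, (mem_inter.mp hy₂).1⟩)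
    exact hxB (hxy ▸ (mem_inter.mp hy₁).2)
  have hlow := hfree3.lt_card_union_union hA₁ hA₂ hB hA (fun h => hxB (h ▸ hxA₁))
    (fun h => hxB (h ▸ hxA₂))
  have hup := card_union_union_add_three_le hx hy₁ hy₂ hy
  rw [hunif A₁ hA₁, hunif A₂ hA₂, hunif B hB] at hup
  omega

lemma three_mul_card_filter_mem_le (hunif : IsUniform r H) (hfree3 : GFree H (3 * r - 3) 3)
    (hrich : ∀ A ∈ H, x ∈ A → 3 ≤ #(A ∩ (H.erase A).biUnion id)) :
    3 * #(H.filter (x ∈ ·)) ≤ #H := by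
  have hsplit := card_filter_add_card_filter_not (s := H) (x ∈ ·)
  set S := H.filter (x ∈ ·)
  have hsub : S.biUnion (neighborsAvoiding H x) ⊆ H.filter (x ∉ ·) := by
    intro B hB
    obtain ⟨A, -, hBA⟩ := mem_biUnion.mp hB
    obtain ⟨hB, hxB, -⟩ := mem_filter.mp hBA
    exact mem_filter.mpr ⟨hB, hxB⟩
  have hdisj : (S : Set (Finset V)).PairwiseDisjoint (neighborsAvoiding H x) := by
    intro A₁ hA₁ A₂ hA₂ hA
    rw [coe_filter] at hA₁ hA₂
    exact disjoint_neighborsAvoiding hlin x hunif hfree3 hA₁.1 hA₂.1 hA hA₁.2 hA₂.2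
  have hdouble : 2 * #S ≤ #(H.filter (x ∉ ·)) := calc
    2 * #S = ∑ _A ∈ S, 2 := by rw [sum_const, smul_eq_mul, mul_comm]
    _ ≤ ∑ A ∈ S, #(neighborsAvoiding H x A) := sum_le_sum fun A hA =>
      two_le_card_neighborsAvoiding hlin x (mem_filter.mp hA).1 (mem_filter.mp hA).2
        (hrich A (mem_filter.mp hA).1 (mem_filter.mp hA).2)
    _ = #(S.biUnion (neighborsAvoiding H x)) := (card_biUnion hdisj).symm
    _ ≤ _ := card_le_card hsub
  omega

end Star

end Hypergraph

open Hypergraph in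
theorem max_degree_le_general {V : Type*} [DecidableEq V] (r e : ℕ)
    (H : Finset (Finset V)) (part : V → Fin r)
    (hpart : ∀ A ∈ H, ∀ i : Fin r, (A.filter fun x => part x = i).card = 1)
    (hlin : ∀ A ∈ H, ∀ B ∈ H, A ≠ B → (A ∩ B).card ≤ 1)
    (hcardH : H.card = e)
    (hfree3 : GFree H (3 * r - 3) 3)
    (hfree : GFree H ((e - 1) * (r - 2) + 3) (e - 1))
    (hV : (H.biUnion id).card ≤ e * (r - 2) + 3) :
    ∀ x ∈ H.biUnion id, (H.filter fun A => x ∈ A).card ≤ e / 3 := by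
  have hunif : IsUniform r H := fun A hA => by
    simpa using card_eq_of_card_fiber_eq_one part (hpart A hA)
  subst hcardH
  intro x _
  suffices 3 * #(H.filter (x ∈ ·)) ≤ #H by omega
  exact three_mul_card_filter_mem_le hlin x hunif hfree3 fun A hA _ =>
    three_le_card_inter_biUnion_erase hunif hfree hV hA

theorem max_degree_le {V : Type*} [DecidableEq V] (r e : ℕ) (hr : 3 ≤ r) (he : 4 ≤ e)
    (H : Finset (Finset V)) (part : V → Fin r)
    (hpart : ∀ A ∈ H, ∀ i : Fin r, (A.filter fun x => part x = i).card = 1)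
    (hlin : ∀ A ∈ H, ∀ B ∈ H, A ≠ B → (A ∩ B).card ≤ 1)
    (hcardH : H.card = e)
    (hfree3 : GFree H (3 * r - 3) 3)
    (hfree : GFree H ((e - 1) * (r - 2) + 3) (e - 1))
    (hV : (H.biUnion id).card ≤ e * (r - 2) + 3) :
    ∀ x ∈ H.biUnion id, (H.filter fun A => x ∈ A).card ≤ e / 3 :=
  max_degree_le_general r e H part hpart hlin hcardH hfree3 hfree hV
end
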